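/- arXiv:2604.20400 — 4 statements merged into one kernel-verified Lean document; each statement's English description precedes it below -/
import Mathlib

section
/- Let β be a fixed nonzero real number. There is a constant C > 0 (depending only on β) such that for all real L ≥ 1 and X ≥ 1, the number of pairs (l₁, l₂) of integers with L < l₁, l₂ ≤ 2L satisfying |(L/l₁)^β − (L/l₂)^β| ≤ 1/X is at most C · L² · (1/L + 1/X). -/
open Finset Real

/-! On `[1/2, 1]` the derivative of `t ↦ t ^ β` stays away from zero, so by the mean value theorem
`|x ^ β - y ^ β| ≥ m |x - y|` there. With `x = L / l₁`, `y = L / l₂` this forces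
`|l₁ - l₂| ≤ 4L / (m X)`, and each `l₁` has at most `8L / (m X) + 1` such partners among
the at most `2L` integers of `(L, 2L]`. -/

lemma mul_abs_sub_le_abs_sub_of_le_abs_deriv {f f' : ℝ → ℝ} {a b m : ℝ}
    (hf : ∀ t ∈ Set.Icc a b, HasDerivAt f (f' t) t) (hm : ∀ t ∈ Set.Icc a b, m ≤ |f' t|)
    {x y : ℝ} (hx : x ∈ Set.Icc a b) (hy : y ∈ Set.Icc a b) :
    m * |x - y| ≤ |f x - f y| := by
  wlog hxy : x < y generalizing x y
  · rcases (not_lt.mp hxy).eq_or_lt with rfl | hyx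
    · simp
    · rw [abs_sub_comm x, abs_sub_comm (f x)]
      exact this hy hx hyx
  have hsub : Set.Icc x y ⊆ Set.Icc a b := Set.Icc_subset_Icc hx.1 hy.2
  obtain ⟨c, hc, hslope⟩ := exists_hasDerivAt_eq_slope f f' hxy
    (fun t ht => (hf t (hsub ht)).continuousAt.continuousWithinAt)
    (fun t ht => hf t (hsub (Set.Ioo_subset_Icc_self ht)))
  have hyx : 0 < y - x := sub_pos.mpr hxy
  calc m * |x - y| ≤ |f' c| * |x - y| :=
        mul_le_mul_of_nonneg_right (hm c (hsub (Set.Ioo_subset_Icc_self hc))) (abs_nonneg _)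
    _ = |f x - f y| := by
        rw [hslope, abs_div, abs_sub_comm x, abs_of_pos hyx, div_mul_cancel₀ _ hyx.ne',
          abs_sub_comm]

lemma min_rpow_le_rpow_of_mem_Icc {a b t : ℝ} (ha : 0 < a) (ht : t ∈ Set.Icc a b) (r : ℝ) :
    min (a ^ r) (b ^ r) ≤ t ^ r := by
  rcases le_total 0 r with hr | hr
  · exact (min_le_left _ _).trans (rpow_le_rpow ha.le ht.1 hr)
  · exact (min_le_right _ _).trans (rpow_le_rpow_of_nonpos (ha.trans_le ht.1) ht.2 hr)

lemma mul_abs_sub_le_abs_rpow_sub_rpow {a b : ℝ} (ha : 0 < a) (β : ℝ) {x y : ℝ}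
    (hx : x ∈ Set.Icc a b) (hy : y ∈ Set.Icc a b) :
    |β| * min (a ^ (β - 1)) (b ^ (β - 1)) * |x - y| ≤ |x ^ β - y ^ β| := by
  refine mul_abs_sub_le_abs_sub_of_le_abs_deriv (f' := fun t => β * t ^ (β - 1))
    (fun t ht => hasDerivAt_rpow_const (Or.inl (ha.trans_le ht.1).ne')) (fun t ht => ?_) hx hy
  rw [abs_mul, abs_of_pos (rpow_pos_of_pos (ha.trans_le ht.1) _)]
  exact mul_le_mul_of_nonneg_left (min_rpow_le_rpow_of_mem_Icc ha ht _) (abs_nonneg β)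

lemma Nat.mem_Icc_of_abs_sub_le {i j : ℕ} {r : ℝ} (h : |(i : ℝ) - j| ≤ r) :
    j ∈ Icc (i - ⌊r⌋₊) (i + ⌊r⌋₊) := by
  have hr : 0 ≤ r := (abs_nonneg _).trans h
  have hji : j - i ≤ ⌊r⌋₊ := by
    refine Nat.le_floor ?_
    rcases le_total i j with hij | hji
    · rw [Nat.cast_sub hij]; linarith [neg_abs_le ((i : ℝ) - j)]
    · simpa [Nat.sub_eq_zero_of_le hji] using hr
  have hij : i - j ≤ ⌊r⌋₊ := by
    refine Nat.le_floor ?_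
    rcases le_total j i with hji | hij
    · rw [Nat.cast_sub hji]; linarith [le_abs_self ((i : ℝ) - j)]
    · simpa [Nat.sub_eq_zero_of_le hij] using hr
  rw [mem_Icc]
  omega

lemma Nat.card_near_diagonal_le (s : Finset ℕ) {r : ℝ} (hr : 0 ≤ r) :
    (#{p ∈ s ×ˢ s | |(p.1 : ℝ) - p.2| ≤ r} : ℝ) ≤ (2 * r + 1) * #s := by
  set T := {p ∈ s ×ˢ s | |(p.1 : ℝ) - p.2| ≤ r}
  have hfiber : ∀ i ∈ s, #{p ∈ T | p.1 = i} ≤ 2 * ⌊r⌋₊ + 1 := by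
    intro i _
    refine (card_le_card_of_injOn Prod.snd (t := Icc (i - ⌊r⌋₊) (i + ⌊r⌋₊)) ?_ ?_).trans ?_
    · intro p hp
      simp only [T, mem_coe, mem_filter] at hp
      exact Nat.mem_Icc_of_abs_sub_le (hp.2 ▸ hp.1.2)
    · intro p hp q hq hpq
      simp only [mem_coe, mem_filter] at hp hq
      exact Prod.ext (hp.2.trans hq.2.symm) hpq
    · rw [Nat.card_Icc]; omega
  have hcount : #T ≤ (2 * ⌊r⌋₊ + 1) * #s := card_le_mul_card_image_of_maps_to
    (fun p hp => (mem_product.mp (mem_filter.mp hp).1).1) _ hfiber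
  calc (#T : ℝ) ≤ (2 * ⌊r⌋₊ + 1 : ℕ) * #s := by exact_mod_cast hcount
    _ ≤ (2 * r + 1) * #s := by
        push_cast
        gcongr
        exact Nat.floor_le hr

lemma Nat.mem_Ioc_floor_iff {a b : ℝ} (ha : 0 ≤ a) (hb : 0 ≤ b) {n : ℕ} :
    n ∈ Ioc ⌊a⌋₊ ⌊b⌋₊ ↔ a < n ∧ (n : ℝ) ≤ b := by
  rw [mem_Ioc, Nat.floor_lt ha, Nat.le_floor_iff hb]

lemma Nat.card_Ioc_floor_le {a b : ℝ} (ha : 0 ≤ a) (hab : a ≤ b) :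
    (#(Ioc ⌊a⌋₊ ⌊b⌋₊) : ℝ) ≤ b - a + 1 := by
  rw [Nat.card_Ioc, Nat.cast_sub (Nat.floor_le_floor hab)]
  linarith [Nat.floor_le (ha.trans hab), Nat.lt_floor_add_one a]

lemma abs_sub_le_of_abs_sub_comp_div_le {f : ℝ → ℝ} {m L ε u v : ℝ} (hm : 0 < m)
    (hf : ∀ x ∈ Set.Icc (1 / 2 : ℝ) 1, ∀ y ∈ Set.Icc (1 / 2 : ℝ) 1, m * |x - y| ≤ |f x - f y|)
    (hu : L < u ∧ u ≤ 2 * L) (hv : L < v ∧ v ≤ 2 * L) (hL : 0 < L)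
    (h : |f (L / u) - f (L / v)| ≤ ε) : |u - v| ≤ 4 * L * ε / m := by
  have hu0 : 0 < u := hL.trans hu.1
  have hv0 : 0 < v := hL.trans hv.1
  have hmem : ∀ w, L < w ∧ w ≤ 2 * L → L / w ∈ Set.Icc (1 / 2 : ℝ) 1 := fun w hw =>
    ⟨by rw [le_div_iff₀ (hL.trans hw.1)]; linarith, div_le_one_of_le₀ hw.1.le (hL.trans hw.1).le⟩
  have hquot : |L / u - L / v| = L * |u - v| / (u * v) := by
    rw [div_sub_div _ _ hu0.ne' hv0.ne', abs_div, abs_of_pos (mul_pos hu0 hv0),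
      show L * v - u * L = L * (v - u) by ring, abs_mul, abs_of_pos hL, abs_sub_comm]
  have hgap := (hf _ (hmem u hu) _ (hmem v hv)).trans h
  rw [hquot, mul_div_assoc', div_le_iff₀ (mul_pos hu0 hv0)] at hgap
  have huv : u * v ≤ 2 * L * (2 * L) := mul_le_mul hu.2 hv.2 hv0.le (by linarith)
  have hε : 0 ≤ ε := (abs_nonneg _).trans h
  rw [le_div_iff₀ hm]
  refine le_of_mul_le_mul_left ?_ hL
  nlinarith

theorem spacing_count_inverse_power (β : ℝ) (hβ : β ≠ 0) :
    ∃ C > 0, ∀ L X : ℝ, 1 ≤ L → 1 ≤ X →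
      (((Finset.Ioc ⌊L⌋₊ ⌊2 * L⌋₊ ×ˢ Finset.Ioc ⌊L⌋₊ ⌊2 * L⌋₊).filter
          (fun p => |(L / (p.1 : ℝ)) ^ β - (L / (p.2 : ℝ)) ^ β| ≤ 1 / X)).card : ℝ)
        ≤ C * L ^ 2 * (1 / L + 1 / X) := by
  set m := |β| * min ((1 / 2 : ℝ) ^ (β - 1)) (1 ^ (β - 1))
  have hm : 0 < m := by positivity
  refine ⟨16 / m + 2, by positivity, fun L X hL hX => ?_⟩
  have hL0 : 0 < L := by linarith
  set s := Ioc ⌊L⌋₊ ⌊2 * L⌋₊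
  have hs : ∀ n ∈ s, L < n ∧ (n : ℝ) ≤ 2 * L := fun n hn =>
    (Nat.mem_Ioc_floor_iff hL0.le (by linarith)).mp hn
  have hnear : ∀ p ∈ s ×ˢ s, |(L / (p.1 : ℝ)) ^ β - (L / (p.2 : ℝ)) ^ β| ≤ 1 / X →
      |(p.1 : ℝ) - p.2| ≤ 4 * L * (1 / X) / m := fun p hp =>
    abs_sub_le_of_abs_sub_comp_div_le hm
      (fun x hx y hy => mul_abs_sub_le_abs_rpow_sub_rpow (by norm_num) β hx hy)
      (hs _ (mem_product.mp hp).1) (hs _ (mem_product.mp hp).2) hL0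
  calc _ ≤ (#{p ∈ s ×ˢ s | |(p.1 : ℝ) - p.2| ≤ 4 * L * (1 / X) / m} : ℝ) := by
        exact_mod_cast card_le_card (monotone_filter_right _ hnear)
    _ ≤ (2 * (4 * L * (1 / X) / m) + 1) * #s := Nat.card_near_diagonal_le s (by positivity)
    _ ≤ (2 * (4 * L * (1 / X) / m) + 1) * (2 * L) := by
        gcongr
        linarith [Nat.card_Ioc_floor_le hL0.le (by linarith : L ≤ 2 * L)]
    _ ≤ (16 / m + 2) * L ^ 2 * (1 / L + 1 / X) := by
        have : 0 ≤ 16 * L / m := by positivity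
        field_simp
        nlinarith
end

section
/- Let z₁, …, z_N be complex numbers and define |∑_{1≤n≤N} z_n|* = max over 1 ≤ N₁ ≤ N₂ ≤ N of |∑_{n=N₁}^{N₂} z_n|. Then for every real k ≥ 1, (|∑_{1≤n≤N} z_n|*)^k ≤ (1 + log N)^{k−1} · ∫_{−1/2}^{1/2} |∑_{n=1}^{N} z_n e(nt)|^k · 𝓛(t) dt, where 𝓛(t) = min{N, 1/(2|t|)} and e(x) = e^{2πix}. -/
/-!
Orthogonality of the characters `e(nt)` on `[-1/2, 1/2]` writes the partial sum over `[N₁, N₂]` as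
`∫ S(t) conj D(t) dt`, where `S(t) = ∑_{n ≤ N} zₙ e(nt)` and `D(t) = ∑_{N₁ ≤ m ≤ N₂} e(mt)`.
The geometric sum `D` is bounded both by its length `≤ N` and, since
`|e(t) - 1| = 2|sin πt| ≥ 4|t|`, by `1/(2|t|)`; hence `|∑_{N₁}^{N₂} zₙ| ≤ ∫ |S| 𝓛`. Jensen's inequality for `x ↦ x^k` with respect
to the measure `𝓛(t) dt`, of total mass `1 + log N`, finishes the proof.
-/

open Finset MeasureTheory Complex ComplexConjugate
open scoped Real

theorem rpow_integral_le {α : Type*} [MeasurableSpace α] {μ : Measure α} [IsFiniteMeasure μ]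
    {f : α → ℝ} {k : ℝ} (hk : 1 ≤ k) (hf0 : ∀ᵐ x ∂μ, 0 ≤ f x) (hf : Integrable f μ)
    (hfk : Integrable (fun x => f x ^ k) μ) :
    (∫ x, f x ∂μ) ^ k ≤ μ.real Set.univ ^ (k - 1) * ∫ x, f x ^ k ∂μ := by
  have hk0 : 0 < k := by linarith
  rcases eq_zero_or_neZero μ with rfl | _
  · simp [Real.zero_rpow hk0.ne']
  have hW : 0 < μ.real Set.univ := measureReal_univ_pos
  have jensen : (⨍ x, f x ∂μ) ^ k ≤ ⨍ x, f x ^ k ∂μ :=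
    (convexOn_rpow hk).map_average_le (continuousOn_id.rpow_const fun _ _ => Or.inr hk0.le)
      isClosed_Ici hf0 hf hfk
  rw [average_eq, average_eq, smul_eq_mul, smul_eq_mul,
    Real.mul_rpow (inv_nonneg.2 hW.le) (integral_nonneg_of_ae hf0), Real.inv_rpow hW.le] at jensen
  calc (∫ x, f x ∂μ) ^ k
      = μ.real Set.univ ^ k * ((μ.real Set.univ ^ k)⁻¹ * (∫ x, f x ∂μ) ^ k) := by field_simp
    _ ≤ μ.real Set.univ ^ k * ((μ.real Set.univ)⁻¹ * ∫ x, f x ^ k ∂μ) := by gcongr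
    _ = μ.real Set.univ ^ (k - 1) * ∫ x, f x ^ k ∂μ := by
        rw [Real.rpow_sub hW, Real.rpow_one]; ring

theorem rpow_integral_mul_le {α : Type*} [MeasurableSpace α] {μ : Measure α}
    {f w : α → ℝ} {k : ℝ} (hk : 1 ≤ k) (hf0 : ∀ x, 0 ≤ f x) (hw0 : ∀ x, 0 ≤ w x)
    (hw : Integrable w μ) (hfw : Integrable (fun x => f x * w x) μ)
    (hfkw : Integrable (fun x => f x ^ k * w x) μ) :
    (∫ x, f x * w x ∂μ) ^ k ≤ (∫ x, w x ∂μ) ^ (k - 1) * ∫ x, f x ^ k * w x ∂μ := by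
  set ν := μ.withDensity fun x => ENNReal.ofReal (w x)
  have hmeas : AEMeasurable (fun x => ENNReal.ofReal (w x)) μ := hw.aemeasurable.ennreal_ofReal
  have hfin : ∀ᵐ x ∂μ, ENNReal.ofReal (w x) < ⊤ := .of_forall fun _ => ENNReal.ofReal_lt_top
  have hdens (g : α → ℝ) : ∫ x, g x ∂ν = ∫ x, g x * w x ∂μ := by
    simp only [ν, integral_withDensity_eq_integral_toReal_smul₀ hmeas hfin, smul_eq_mul,
      ENNReal.toReal_ofReal (hw0 _), mul_comm]
  have hint (g : α → ℝ) (hg : Integrable (fun x => g x * w x) μ) : Integrable g ν := by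
    simpa only [ν, integrable_withDensity_iff_integrable_smul₀' hmeas hfin, smul_eq_mul,
      ENNReal.toReal_ofReal (hw0 _), mul_comm] using hg
  have hmass : ν.real Set.univ = ∫ x, w x ∂μ := by simpa using hdens 1
  have : IsFiniteMeasure ν := isFiniteMeasure_withDensity_ofReal hw.2
  rw [← hdens, ← hdens, ← hmass]
  exact rpow_integral_le hk (.of_forall hf0) (hint f hfw) (hint _ hfkw)

noncomputable def maximalKernel (N : ℕ) (t : ℝ) : ℝ := min (N : ℝ) (1 / (2 * |t|))

namespace maximalKernel

theorem nonneg (N : ℕ) (t : ℝ) : 0 ≤ maximalKernel N t :=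
  le_min N.cast_nonneg (by positivity)

theorem even (N : ℕ) (t : ℝ) : maximalKernel N (-t) = maximalKernel N t := by
  simp only [maximalKernel, abs_neg]

theorem measurable (N : ℕ) : Measurable (maximalKernel N) := by
  unfold maximalKernel; fun_prop

theorem intervalIntegrable (N : ℕ) (a b : ℝ) :
    IntervalIntegrable (maximalKernel N) volume a b := by
  refine (_root_.intervalIntegrable_const (c := (N : ℝ))).mono_fun
    (measurable N).aestronglyMeasurable.restrict (Filter.Eventually.of_forall fun t => ?_)
  dsimp only
  rw [Real.norm_of_nonneg (nonneg N t), Real.norm_natCast]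
  exact min_le_left _ _

theorem integral_zero_half {N : ℕ} (hN : 1 ≤ N) :
    ∫ t in (0 : ℝ)..(1 / 2), maximalKernel N t = (1 + Real.log N) / 2 := by
  have hN : (1 : ℝ) ≤ N := by exact_mod_cast hN
  -- the two branches of the minimum cross at `c`
  set c : ℝ := 1 / (2 * N)
  have hc0 : 0 < c := by positivity
  have hc : c ≤ 1 / 2 := by
    rw [div_le_div_iff₀ (by positivity) two_pos]; linarith
  have hnear : ∫ t in (0 : ℝ)..c, maximalKernel N t = 1 / 2 := by
    have : ∀ᵐ t, t ∈ Set.uIoc 0 c → maximalKernel N t = N := .of_forall fun t ht => by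
      rw [Set.uIoc_of_le hc0.le] at ht
      refine min_eq_left ?_
      rw [abs_of_pos ht.1, le_div_iff₀ (by linarith [ht.1])]
      have := ht.2
      rw [le_div_iff₀ (by positivity)] at this
      linarith
    rw [intervalIntegral.integral_congr_ae this, intervalIntegral.integral_const, smul_eq_mul]
    simp only [c]
    field_simp
    ring
  have hfar : ∫ t in c..(1 / 2), maximalKernel N t = Real.log N / 2 := by
    have : Set.EqOn (maximalKernel N) (fun t => 2⁻¹ * t⁻¹) (Set.uIcc c (1 / 2)) := fun t ht => by
      rw [Set.uIcc_of_le hc] at ht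
      have ht0 : 0 < t := hc0.trans_le ht.1
      rw [maximalKernel, abs_of_pos ht0, min_eq_right, one_div, mul_inv]
      rw [div_le_iff₀ (by positivity)]
      have := ht.1
      rw [div_le_iff₀ (by positivity)] at this
      linarith
    rw [intervalIntegral.integral_congr this, intervalIntegral.integral_const_mul,
      integral_inv (by rw [Set.uIcc_of_le hc]; exact fun h => hc0.not_ge h.1)]
    rw [show 1 / 2 / c = N by simp only [c]; field_simp]
    ring
  rw [← intervalIntegral.integral_add_adjacent_intervals (intervalIntegrable N _ _)
    (intervalIntegrable N _ _), hnear, hfar]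
  ring

theorem integral {N : ℕ} (hN : 1 ≤ N) :
    ∫ t in (-(1 : ℝ) / 2)..(1 / 2), maximalKernel N t = 1 + Real.log N := by
  have hleft : ∫ t in (-(1 : ℝ) / 2)..0, maximalKernel N t = (1 + Real.log N) / 2 := by
    calc ∫ t in (-(1 : ℝ) / 2)..0, maximalKernel N t
        = ∫ t in -(1 / 2 : ℝ)..(-0), maximalKernel N t := by norm_num
      _ = ∫ t in (0 : ℝ)..(1 / 2), maximalKernel N (-t) :=
          (intervalIntegral.integral_comp_neg _).symm
      _ = (1 + Real.log N) / 2 := by simp only [even, integral_zero_half hN]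
  rw [← intervalIntegral.integral_add_adjacent_intervals (intervalIntegrable N _ _)
    (intervalIntegrable N _ _), hleft, integral_zero_half hN]
  ring

end maximalKernel

theorem integral_exp_two_pi_I_int_mul (d : ℤ) (a : ℝ) :
    ∫ t in a..(a + 1), exp (2 * π * I * d * t) = if d = 0 then 1 else 0 := by
  split_ifs with hd
  · simp [hd]
  have hc : 2 * π * I * d ≠ 0 := by simp [Real.pi_ne_zero, I_ne_zero, hd]
  rw [integral_exp_mul_complex hc, div_eq_zero_iff, sub_eq_zero]
  left
  have hperiod : 2 * π * I * d * ↑(a + 1) = 2 * π * I * d * a + d * (2 * π * I) := by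
    push_cast; ring
  rw [hperiod, exp_add, exp_int_mul_two_pi_mul_I, mul_one]

noncomputable def expSum (s : Finset ℕ) (z : ℕ → ℂ) (t : ℝ) : ℂ :=
  ∑ n ∈ s, z n * exp (2 * π * I * (n * t))

@[fun_prop]
theorem continuous_expSum (s : Finset ℕ) (z : ℕ → ℂ) : Continuous (expSum s z) := by
  unfold expSum; fun_prop

theorem integral_exp_mul_conj_exp (n m : ℕ) :
    ∫ t in (-(1 : ℝ) / 2)..(1 / 2), exp (2 * π * I * (n * t)) * conj (exp (2 * π * I * (m * t)))
      = if n = m then 1 else 0 := by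
  have hprod (t : ℝ) : exp (2 * π * I * (n * t)) * conj (exp (2 * π * I * (m * t)))
      = exp (2 * π * I * ((n - m : ℤ) : ℂ) * t) := by
    rw [← exp_conj, ← exp_add]
    congr 1
    simp only [map_mul, conj_ofReal, conj_I, map_natCast, map_ofNat]
    push_cast; ring
  have h := integral_exp_two_pi_I_int_mul (n - m) (-1 / 2)
  simp only [show (-1 / 2 : ℝ) + 1 = 1 / 2 by norm_num, sub_eq_zero, Nat.cast_inj] at h
  simp_rw [hprod]
  exact h

theorem sum_eq_integral_expSum_mul_conj {s u : Finset ℕ} (hsu : s ⊆ u) (z : ℕ → ℂ) :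
    ∑ n ∈ s, z n =
      ∫ t in (-(1 : ℝ) / 2)..(1 / 2), expSum u z t * conj (expSum s 1 t) := by
  have hexpand (t : ℝ) : expSum u z t * conj (expSum s 1 t) = ∑ n ∈ u, ∑ m ∈ s,
      z n * (exp (2 * π * I * (n * t)) * conj (exp (2 * π * I * (m * t)))) := by
    simp only [expSum, Pi.one_apply, one_mul, map_sum, sum_mul_sum, mul_assoc]
  have hint (n m : ℕ) : IntervalIntegrable (fun t : ℝ =>
      z n * (exp (2 * π * I * (n * t)) * conj (exp (2 * π * I * (m * t)))))
      volume (-1 / 2) (1 / 2) := by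
    apply Continuous.intervalIntegrable; fun_prop
  simp_rw [hexpand]
  rw [intervalIntegral.integral_finsetSum fun n _ => by
    apply Continuous.intervalIntegrable; fun_prop]
  simp_rw [intervalIntegral.integral_finsetSum fun m _ => hint _ m,
    intervalIntegral.integral_const_mul, integral_exp_mul_conj_exp, mul_ite, mul_one, mul_zero,
    sum_ite_eq, ← sum_filter, filter_mem_eq_inter, inter_eq_right.2 hsu]

theorem norm_sub_one_mul_norm_geom_sum_Ico_le {𝕜 : Type*} [NormedDivisionRing 𝕜] {w : 𝕜}
    (hw : ‖w‖ = 1) (a b : ℕ) : ‖w - 1‖ * ‖∑ m ∈ Ico a b, w ^ m‖ ≤ 2 := by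
  rcases le_total a b with hab | hba
  · rw [mul_comm, ← norm_mul, geom_sum_Ico_mul w hab]
    calc ‖w ^ b - w ^ a‖ ≤ ‖w ^ b‖ + ‖w ^ a‖ := norm_sub_le _ _
      _ = 2 := by rw [norm_pow, norm_pow, hw, one_pow]; norm_num
  · rw [Ico_eq_empty_of_le hba, sum_empty, norm_zero, mul_zero]
    norm_num

theorem two_pi_I_mul_eq_I_mul_ofReal (t : ℝ) : 2 * π * I * t = I * ((2 * π * t : ℝ) : ℂ) := by
  push_cast; ring

theorem norm_exp_two_pi_I_mul_ofReal (t : ℝ) : ‖exp (2 * π * I * t)‖ = 1 := by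
  rw [two_pi_I_mul_eq_I_mul_ofReal, norm_exp_I_mul_ofReal]

theorem four_mul_abs_le_norm_exp_sub_one {t : ℝ} (ht : |t| ≤ 1 / 2) :
    4 * |t| ≤ ‖exp (2 * π * I * t) - 1‖ := by
  have hjordan := Real.mul_abs_le_abs_sin (x := π * t) (by
    rw [abs_mul, abs_of_pos Real.pi_pos]; nlinarith [Real.pi_pos])
  rw [abs_mul, abs_of_pos Real.pi_pos, ← mul_assoc, div_mul_cancel₀ _ Real.pi_ne_zero] at hjordan
  have := norm_exp_I_mul_ofReal_sub_one (2 * π * t)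
  rw [← two_pi_I_mul_eq_I_mul_ofReal, show 2 * π * t / 2 = π * t by ring, norm_mul,
    Real.norm_two, Real.norm_eq_abs] at this
  linarith

theorem expSum_one_eq_geom_sum (s : Finset ℕ) (t : ℝ) :
    expSum s 1 t = ∑ m ∈ s, exp (2 * π * I * t) ^ m := by
  refine sum_congr rfl fun m _ => ?_
  rw [Pi.one_apply, one_mul, ← exp_nat_mul]
  ring_nf

theorem norm_expSum_one_le_card (s : Finset ℕ) (t : ℝ) : ‖expSum s 1 t‖ ≤ #s := by
  rw [expSum_one_eq_geom_sum]
  refine (norm_sum_le _ _).trans ?_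
  simp [norm_exp_two_pi_I_mul_ofReal]

theorem two_mul_abs_mul_norm_expSum_Icc_le (a b : ℕ) {t : ℝ} (ht : |t| ≤ 1 / 2) :
    2 * |t| * ‖expSum (Icc a b) 1 t‖ ≤ 1 := by
  have hgeom := norm_sub_one_mul_norm_geom_sum_Ico_le (norm_exp_two_pi_I_mul_ofReal t) a (b + 1)
  rw [Ico_add_one_right_eq_Icc, ← expSum_one_eq_geom_sum] at hgeom
  nlinarith [four_mul_abs_le_norm_exp_sub_one ht, norm_nonneg (expSum (Icc a b) 1 t)]

theorem norm_expSum_Icc_le_maximalKernel {N a b : ℕ} (ha : 1 ≤ a) (hb : b ≤ N) {t : ℝ}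
    (ht : |t| ≤ 1 / 2) (ht0 : t ≠ 0) : ‖expSum (Icc a b) 1 t‖ ≤ maximalKernel N t := by
  refine le_min ((norm_expSum_one_le_card _ t).trans ?_) ?_
  · rw [Nat.card_Icc]; exact_mod_cast (by omega : b + 1 - a ≤ N)
  · rw [le_div_iff₀ (by positivity), mul_comm]
    exact two_mul_abs_mul_norm_expSum_Icc_le a b ht

theorem norm_sum_Icc_le_integral {N a b : ℕ} (ha : 1 ≤ a) (hb : b ≤ N) (z : ℕ → ℂ) :
    ‖∑ n ∈ Icc a b, z n‖ ≤
      ∫ t in (-(1 : ℝ) / 2)..(1 / 2), ‖expSum (Icc 1 N) z t‖ * maximalKernel N t := by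
  have hab : -(1 : ℝ) / 2 ≤ 1 / 2 := by norm_num
  have hS := continuous_expSum (Icc 1 N) z
  rw [sum_eq_integral_expSum_mul_conj (Icc_subset_Icc ha hb)]
  refine (intervalIntegral.norm_integral_le_integral_norm hab).trans ?_
  refine intervalIntegral.integral_mono_ae_restrict hab
    (by apply Continuous.intervalIntegrable; fun_prop)
    ((maximalKernel.intervalIntegrable N _ _).continuousOn_mul hS.norm.continuousOn) ?_
  have hne : ∀ᵐ t : ℝ, t ≠ 0 := measure_singleton 0 |> measure_eq_zero_iff_ae_notMem.1
  filter_upwards [ae_restrict_mem measurableSet_Icc, ae_restrict_of_ae hne] with t ht ht0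
  rw [norm_mul, RCLike.norm_conj]
  exact mul_le_mul_of_nonneg_left
    (norm_expSum_Icc_le_maximalKernel ha hb (abs_le.2 ⟨by linarith [ht.1], ht.2⟩) ht0)
    (norm_nonneg _)

theorem maximal_partial_sum_integral_general (N : ℕ) (z : ℕ → ℂ)
    (k : ℝ) (hk : 1 ≤ k) (N₁ N₂ : ℕ) (h1 : 1 ≤ N₁) (h12 : N₁ ≤ N₂) (h2 : N₂ ≤ N) :
    ‖∑ n ∈ Finset.Icc N₁ N₂, z n‖ ^ k ≤
      (1 + Real.log N) ^ (k - 1) *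
        ∫ t in (-(1:ℝ)/2)..(1/2),
          ‖∑ n ∈ Finset.Icc 1 N, z n * Complex.exp (2 * Real.pi * Complex.I * (n * t))‖ ^ k *
            min (N : ℝ) (1 / (2 * |t|)) := by
  have hab : -(1 : ℝ) / 2 ≤ 1 / 2 := by norm_num
  have hS := (continuous_expSum (Icc 1 N) z).norm
  have hL := maximalKernel.intervalIntegrable N (-1 / 2) (1 / 2)
  have hSL := hL.continuousOn_mul hS.continuousOn
  have hSkL := hL.continuousOn_mul (hS.rpow_const fun _ => Or.inr (by linarith)).continuousOn
  calc ‖∑ n ∈ Icc N₁ N₂, z n‖ ^ k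
      ≤ (∫ t in (-(1 : ℝ) / 2)..(1 / 2), ‖expSum (Icc 1 N) z t‖ * maximalKernel N t) ^ k :=
        Real.rpow_le_rpow (norm_nonneg _) (norm_sum_Icc_le_integral h1 h2 z) (by linarith)
    _ ≤ (∫ t in (-(1 : ℝ) / 2)..(1 / 2), maximalKernel N t) ^ (k - 1) *
          ∫ t in (-(1 : ℝ) / 2)..(1 / 2), ‖expSum (Icc 1 N) z t‖ ^ k * maximalKernel N t := by
        simp only [intervalIntegral.integral_of_le hab]
        exact rpow_integral_mul_le hk (fun _ => norm_nonneg _) (maximalKernel.nonneg N)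
          hL.1 hSL.1 hSkL.1
    _ = _ := by rw [maximalKernel.integral (by omega)]; rfl

theorem maximal_partial_sum_integral (N : ℕ) (hN : 1 ≤ N) (z : ℕ → ℂ)
    (k : ℝ) (hk : 1 ≤ k) (N₁ N₂ : ℕ) (h1 : 1 ≤ N₁) (h12 : N₁ ≤ N₂) (h2 : N₂ ≤ N) :
    ‖∑ n ∈ Finset.Icc N₁ N₂, z n‖ ^ k ≤
      (1 + Real.log N) ^ (k - 1) *
        ∫ t in (-(1:ℝ)/2)..(1/2),
          ‖∑ n ∈ Finset.Icc 1 N, z n * Complex.exp (2 * Real.pi * Complex.I * (n * t))‖ ^ k *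
            min (N : ℝ) (1 / (2 * |t|)) :=
  maximal_partial_sum_integral_general N z k hk N₁ N₂ h1 h12 h2
end

section
/- Let f be continuously differentiable on an interval I of real numbers with f′ monotonic, and suppose ‖f′(x)‖ ≥ λ > 0 for all x ∈ I, where ‖t‖ denotes the distance from t to the nearest integer. Then |∑_{n ∈ I} e(f(n))| ≪ 1/λ, with an absolute implied constant. -/
/-!
Write `e(x) = exp (2πix)`. The range of `f'` is connected and stays `λ` away from the integers, so
it lies in `[m + λ, m + 1 - λ]` for one integer `m`; replacing `f x` by `f x - m x` changes no
`e(f n)`, so we may assume `λ ≤ f' ≤ 1 - λ`. By the mean value theorem the increments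
`d n = f (n + 1) - f n` then lie in `[λ, 1 - λ]` and are monotone in `n`. Now
`e(f n) = c n * (e(f (n + 1)) - e(f n))` with `c n = (e(d n) - 1)⁻¹ = -(1 + i cot (π d n)) / 2`,
so partial summation bounds the sum by the size of the last `c n` plus the total variation of the
`c n`; the latter telescopes because `cot` is monotone, and both are `O(1/λ)` because
`sin (π d n) ≥ 2λ`.
-/

open Real

section
open Complex Set

theorem norm_exp_two_pi_mul_I_sub_one (x : ℝ) :
    ‖exp (2 * π * I * x) - 1‖ = 2 * |Real.sin (π * x)| := by
  rw [show 2 * π * I * x = I * ((2 * π * x : ℝ) : ℂ) by push_cast; ring,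
    norm_exp_I_mul_ofReal_sub_one, norm_mul, Real.norm_eq_abs, Real.norm_eq_abs, abs_two]
  ring_nf

theorem inv_exp_two_pi_mul_I_sub_one {x : ℝ} (hx : Real.sin (π * x) ≠ 0) :
    (exp (2 * π * I * x) - 1)⁻¹ = -(1 + I * Real.cot (π * x)) / 2 := by
  have hne : exp (2 * π * I * x) - 1 ≠ 0 := by
    rw [← norm_pos_iff, norm_exp_two_pi_mul_I_sub_one]; positivity
  have hne' : 1 - exp (2 * π * I * x) ≠ 0 := by rwa [← neg_sub, neg_ne_zero]
  rw [ofReal_cot, ofReal_mul, cot_pi_eq_exp_ratio]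
  field_simp
  ring_nf

theorem exp_two_pi_mul_I_eq_inv_mul_sub {x y : ℝ} (h : Real.sin (π * (y - x)) ≠ 0) :
    exp (2 * π * I * x) =
      (exp (2 * π * I * (y - x : ℝ)) - 1)⁻¹ * (exp (2 * π * I * y) - exp (2 * π * I * x)) := by
  have hne : exp (2 * π * I * (y - x : ℝ)) - 1 ≠ 0 := by
    rw [← norm_pos_iff, norm_exp_two_pi_mul_I_sub_one]
    exact mul_pos two_pos (abs_pos.2 h)
  rw [show exp (2 * π * I * y) = exp (2 * π * I * x) * exp (2 * π * I * (y - x : ℝ)) by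
      rw [← Complex.exp_add]; push_cast; ring_nf,
    ← mul_sub_one, mul_left_comm, inv_mul_cancel₀ hne, mul_one]

theorem two_mul_le_sin_pi_mul {lam x : ℝ} (hlam : 0 ≤ lam) (h₁ : lam ≤ x)
    (h₂ : x ≤ 1 - lam) :
    2 * lam ≤ Real.sin (π * x) := by
  wlog hx : x ≤ 1 / 2 generalizing x
  · simpa [mul_sub, Real.sin_pi_sub] using
      this (x := 1 - x) (by linarith) (by linarith) (by linarith)
  calc 2 * lam ≤ 2 / π * (π * x) := by field_simp; linarith
    _ ≤ Real.sin (π * x) := Real.mul_le_sin (by nlinarith [pi_pos]) (by nlinarith [pi_pos])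

theorem Real.antitoneOn_cot : AntitoneOn Real.cot (Ioo 0 π) := by
  intro x hx y hy hxy
  have hsx := Real.sin_pos_of_pos_of_lt_pi hx.1 hx.2
  have hsy := Real.sin_pos_of_pos_of_lt_pi hy.1 hy.2
  have hsub : 0 ≤ Real.sin (y - x) :=
    Real.sin_nonneg_of_nonneg_of_le_pi (by linarith) (by linarith [hy.2, hx.1])
  rw [Real.cot_eq_cos_div_sin, Real.cot_eq_cos_div_sin, div_le_div_iff₀ hsy hsx]
  rw [Real.sin_sub] at hsub
  linarith

theorem sum_range_abs_sub_eq {v : ℕ → ℝ} {n : ℕ}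
    (hv : MonotoneOn v (Iic n) ∨ AntitoneOn v (Iic n)) :
    ∑ i ∈ Finset.range n, |v (i + 1) - v i| = |v n - v 0| := by
  wlog hmono : MonotoneOn v (Iic n) generalizing v
  · simpa [abs_sub_comm, neg_add_eq_sub] using
      this (v := -v) (Or.inl (hv.resolve_left hmono).neg) (hv.resolve_left hmono).neg
  rw [abs_of_nonneg (sub_nonneg.2 (hmono (mem_Iic.2 n.zero_le) self_mem_Iic n.zero_le)),
    ← Finset.sum_range_sub]
  refine Finset.sum_congr rfl fun i hi ↦ abs_of_nonneg (sub_nonneg.2 ?_)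
  simp only [Finset.mem_range] at hi
  exact hmono (mem_Iic.2 (by omega)) (mem_Iic.2 (by omega)) (by omega)

open Finset in
theorem norm_sum_range_smul_sub_le {𝕜 V : Type*} [NormedRing 𝕜] [SeminormedAddCommGroup V]
    [Module 𝕜 V] [IsBoundedSMul 𝕜 V] (c : ℕ → 𝕜) {E : ℕ → V} (hE : ∀ k, ‖E k‖ ≤ 1)
    (m : ℕ) :
    ‖∑ k ∈ range (m + 1), c k • (E (k + 1) - E k)‖ ≤
      2 * (‖c m‖ + ∑ i ∈ range m, ‖c (i + 1) - c i‖) := by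
  have hE₀ : ∀ j, ‖E j - E 0‖ ≤ 2 := fun j ↦
    (norm_sub_le _ _).trans (by linarith [hE j, hE 0])
  rw [sum_range_by_parts, add_tsub_cancel_right, sum_range_sub]
  simp_rw [sum_range_sub]
  calc _ ≤ ‖c m • (E (m + 1) - E 0)‖ +
        ∑ i ∈ range m, ‖(c (i + 1) - c i) • (E (i + 1) - E 0)‖ :=
        (norm_sub_le _ _).trans (add_le_add_right (norm_sum_le _ _) _)
    _ ≤ ‖c m‖ * 2 + ∑ i ∈ range m, ‖c (i + 1) - c i‖ * 2 := by
        gcongr with i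
        · exact (norm_smul_le _ _).trans (by gcongr; exact hE₀ _)
        · exact (norm_smul_le _ _).trans (by gcongr; exact hE₀ _)
    _ = _ := by rw [← sum_mul]; ring

theorem abs_cot_pi_mul_le {lam x : ℝ} (hlam : 0 < lam) (hx : x ∈ Icc lam (1 - lam)) :
    |Real.cot (π * x)| ≤ 1 / (2 * lam) := by
  have hsin := two_mul_le_sin_pi_mul hlam.le hx.1 hx.2
  rw [Real.cot_eq_cos_div_sin, abs_div, abs_of_pos (a := Real.sin _) (by linarith)]
  exact div_le_div₀ zero_le_one (abs_cos_le_one _) (by positivity) hsin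

theorem norm_inv_exp_two_pi_mul_I_sub_one_le {lam x : ℝ} (hlam : 0 < lam)
    (hx : x ∈ Icc lam (1 - lam)) : ‖(exp (2 * π * I * x) - 1)⁻¹‖ ≤ 1 / (4 * lam) := by
  have hsin := two_mul_le_sin_pi_mul hlam.le hx.1 hx.2
  rw [norm_inv, norm_exp_two_pi_mul_I_sub_one, abs_of_pos (by linarith), one_div]
  exact inv_anti₀ (by positivity) (by linarith)

theorem norm_sum_range_exp_le {φ : ℕ → ℝ} {n : ℕ} {lam : ℝ} (hlam : 0 < lam)
    (hφ : ∀ k < n, φ (k + 1) - φ k ∈ Icc lam (1 - lam))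
    (hmono : MonotoneOn (fun k ↦ φ (k + 1) - φ k) (Iio n) ∨
      AntitoneOn (fun k ↦ φ (k + 1) - φ k) (Iio n)) :
    ‖∑ k ∈ Finset.range (n + 1), exp (2 * π * I * φ k)‖ ≤ 1 + 3 / (2 * lam) := by
  set d : ℕ → ℝ := fun k ↦ φ (k + 1) - φ k
  set E : ℕ → ℂ := fun k ↦ exp (2 * π * I * φ k)
  set w : ℕ → ℝ := fun k ↦ Real.cot (π * d k)
  set c : ℕ → ℂ := fun k ↦ -(1 + I * w k) / 2
  have hE : ∀ k, ‖E k‖ = 1 := fun k ↦ by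
    simpa [E, mul_comm _ I, mul_assoc] using norm_exp_ofReal_mul_I (2 * π * φ k)
  have hsin : ∀ k < n, 0 < Real.sin (π * d k) := fun k hk ↦ by
    linarith [two_mul_le_sin_pi_mul hlam.le (hφ k hk).1 (hφ k hk).2]
  have hc : ∀ k < n, (exp (2 * π * I * d k) - 1)⁻¹ = c k := fun k hk ↦
    inv_exp_two_pi_mul_I_sub_one (hsin k hk).ne'
  have hEc : ∀ k < n, E k = c k * (E (k + 1) - E k) := fun k hk ↦
    hc k hk ▸ exp_two_pi_mul_I_eq_inv_mul_sub (hsin k hk).ne'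
  cases n with
  | zero =>
    rw [zero_add, Finset.sum_range_one, hE]
    exact le_add_of_nonneg_right (by positivity)
  | succ m =>
  have hw : AntitoneOn w (Iic m) ∨ MonotoneOn w (Iic m) := by
    have hmaps : ∀ k ∈ Iio (m + 1), π * d k ∈ Ioo 0 π := fun k hk ↦ by
      obtain ⟨h₁, h₂⟩ := hφ k hk
      constructor <;> nlinarith [pi_pos]
    rw [← Set.Iio_add_one_eq_Iic]
    refine hmono.imp (fun h i hi j hj hij ↦ ?_) (fun h i hi j hj hij ↦ ?_)
    · exact Real.antitoneOn_cot (hmaps i hi) (hmaps j hj) (by gcongr; exact h hi hj hij)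
    · exact Real.antitoneOn_cot (hmaps j hj) (hmaps i hi) (by gcongr; exact h hi hj hij)
  have hcc : ∀ i, ‖c (i + 1) - c i‖ = |w (i + 1) - w i| / 2 := fun i ↦ by
    rw [show c (i + 1) - c i = ((w i - w (i + 1)) / 2 : ℝ) * I by simp only [c]; push_cast; ring,
      norm_mul, norm_I, mul_one, norm_real, Real.norm_eq_abs, abs_div, abs_two, abs_sub_comm]
  have hwm : |w m| ≤ 1 / (2 * lam) := abs_cot_pi_mul_le hlam (hφ m (lt_add_one m))
  have hw₀ : |w 0| ≤ 1 / (2 * lam) := abs_cot_pi_mul_le hlam (hφ 0 m.succ_pos)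
  have hcm := norm_inv_exp_two_pi_mul_I_sub_one_le hlam (hφ m (lt_add_one m))
  rw [hc m (lt_add_one m)] at hcm
  rw [Finset.sum_range_succ, Finset.sum_congr rfl fun k hk ↦ hEc k (Finset.mem_range.1 hk)]
  calc _ ≤ ‖∑ k ∈ Finset.range (m + 1), c k • (E (k + 1) - E k)‖ + ‖E (m + 1)‖ :=
        norm_add_le _ _
    _ ≤ 2 * (‖c m‖ + ∑ i ∈ Finset.range m, ‖c (i + 1) - c i‖) + 1 := by
        rw [hE]; gcongr; exact norm_sum_range_smul_sub_le c (fun k ↦ (hE k).le) m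
    _ = 2 * ‖c m‖ + |w m - w 0| + 1 := by
        rw [← sum_range_abs_sub_eq hw.symm]; simp only [hcc, ← Finset.sum_div]; ring
    _ ≤ 1 + 3 / (2 * lam) := by
        have := abs_sub (w m) (w 0)
        have : 1 / (4 * lam) = 1 / (2 * lam) / 2 := by ring
        have : 3 / (2 * lam) = 3 * (1 / (2 * lam)) := by ring
        linarith

theorem exists_mem_Ioo_hasDerivAt_eq_sub {g g' : ℝ → ℝ} {x : ℝ}
    (hg : ∀ y ∈ Icc x (x + 1), HasDerivAt g (g' y) y) :
    ∃ ξ ∈ Ioo x (x + 1), g' ξ = g (x + 1) - g x := by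
  obtain ⟨ξ, hξ, h⟩ := exists_hasDerivAt_eq_slope g g' (lt_add_one x)
    (fun y hy ↦ (hg y hy).continuousAt.continuousWithinAt)
    fun y hy ↦ hg y (Ioo_subset_Icc_self hy)
  exact ⟨ξ, hξ, by rw [h, add_sub_cancel_left, div_one]⟩

theorem norm_sum_Icc_exp_le {g g' : ℝ → ℝ} {a b lam : ℝ} (hlam : 0 < lam)
    (hg : ∀ x ∈ Icc a b, HasDerivAt g (g' x) x)
    (hmono : MonotoneOn g' (Icc a b) ∨ AntitoneOn g' (Icc a b))
    (hg' : ∀ x ∈ Icc a b, g' x ∈ Icc lam (1 - lam)) :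
    ‖∑ n ∈ Finset.Icc ⌈a⌉ ⌊b⌋, exp (2 * π * I * g n)‖ ≤ 1 + 3 / (2 * lam) := by
  rcases lt_or_ge ⌊b⌋ ⌈a⌉ with hempty | hle
  · rw [Finset.Icc_eq_empty_of_lt hempty, Finset.sum_empty, norm_zero]; positivity
  set N := ⌈a⌉
  set n := (⌊b⌋ - N).toNat
  have hsub : ∀ k < n, Icc ((N : ℝ) + k) (N + k + 1) ⊆ Icc a b := fun k hk ↦ by
    have hN : a ≤ N := Int.le_ceil a
    have hk' : N + k + 1 ≤ ⌊b⌋ := by omega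
    have hb : ((N + k + 1 : ℤ) : ℝ) ≤ b := (Int.cast_le.2 hk').trans (Int.floor_le b)
    push_cast at hb
    exact Icc_subset_Icc (by linarith [k.cast_nonneg (α := ℝ)]) hb
  choose ξ hξ hξg using fun k (hk : k < n) ↦
    exists_mem_Ioo_hasDerivAt_eq_sub fun y hy ↦ hg y (hsub k hk hy)
  have hd : ∀ k (hk : k < n), g (N + (k + 1 : ℕ)) - g (N + k) = g' (ξ k hk) := fun k hk ↦ by
    rw [hξg, Nat.cast_succ, add_assoc]
  have hξab : ∀ k (hk : k < n), ξ k hk ∈ Icc a b := fun k hk ↦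
    hsub k hk (Ioo_subset_Icc_self (hξ k hk))
  have hξmono : ∀ i (hi : i < n) j (hj : j < n), i ≤ j → ξ i hi ≤ ξ j hj :=
    fun i hi j hj hij ↦ by
      rcases hij.eq_or_lt with rfl | hij
      · rfl
      have : (i : ℝ) + 1 ≤ j := by exact_mod_cast hij
      linarith [(hξ i hi).2, (hξ j hj).1]
  have hcard : (⌊b⌋ + 1 - N).toNat = n + 1 := by omega
  rw [Int.Icc_eq_finset_map, hcard, Finset.sum_map]
  refine le_of_eq_of_le ?_ (norm_sum_range_exp_le (φ := fun k : ℕ ↦ g (N + k)) hlam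
    (fun k hk ↦ hd k hk ▸ hg' _ (hξab k hk)) ?_)
  · simp
  refine hmono.imp (fun h i hi j hj hij ↦ ?_) (fun h i hi j hj hij ↦ ?_)
  · simp only [hd i hi, hd j hj]
    exact h (hξab i hi) (hξab j hj) (hξmono i hi j hj hij)
  · simp only [hd i hi, hd j hj]
    exact h (hξab i hi) (hξab j hj) (hξmono i hi j hj hij)

theorem exists_int_forall_mem_Icc_of_le_abs_sub_round {s : Set ℝ} (hs : IsPreconnected s)
    {f : ℝ → ℝ} (hf : ContinuousOn f s) {lam : ℝ} (hlam : 0 < lam)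
    (h : ∀ x ∈ s, lam ≤ |f x - round (f x)|) :
    ∃ m : ℤ, ∀ x ∈ s, f x ∈ Icc (m + lam) (m + 1 - lam) := by
  rcases s.eq_empty_or_nonempty with rfl | ⟨x₀, hx₀⟩
  · exact ⟨0, by simp⟩
  have hint : ∀ z : ℤ, (z : ℝ) ∉ f '' s := by
    rintro z ⟨x, hx, hxz⟩
    have := h x hx
    rw [hxz, round_intCast, sub_self, abs_zero] at this
    linarith
  refine ⟨⌊f x₀⌋, fun x hx ↦ ?_⟩
  have hIcc := (hs.image f hf).Icc_subset (mem_image_of_mem f hx) (mem_image_of_mem f hx₀)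
  have hIcc' := (hs.image f hf).Icc_subset (mem_image_of_mem f hx₀) (mem_image_of_mem f hx)
  have hlo : (⌊f x₀⌋ : ℝ) < f x := by
    by_contra! hle
    exact hint _ (hIcc ⟨hle, Int.floor_le _⟩)
  have hhi : f x < ⌊f x₀⌋ + 1 := by
    by_contra! hle
    exact hint (⌊f x₀⌋ + 1) (hIcc' ⟨by push_cast; exact (Int.lt_floor_add_one _).le,
      by push_cast; exact hle⟩)
  have h₁ := (h x hx).trans (round_le (f x) ⌊f x₀⌋)
  have h₂ := (h x hx).trans (round_le (f x) (⌊f x₀⌋ + 1))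
  rw [abs_of_pos (by linarith)] at h₁
  rw [Int.cast_add, Int.cast_one, abs_of_neg (by linarith)] at h₂
  constructor <;> linarith

theorem exp_two_pi_mul_I_mul_sub_intCast (x : ℝ) (k : ℤ) :
    exp (2 * π * I * (x - k : ℝ)) = exp (2 * π * I * x) := by
  rw [ofReal_sub, mul_sub, Complex.exp_sub, ofReal_intCast, mul_comm _ (k : ℂ),
    exp_int_mul_two_pi_mul_I, div_one]

end

theorem kusmin_landau :
    ∃ C > 0, ∀ (a b : ℝ), a ≤ b → ∀ (f f' : ℝ → ℝ) (lam : ℝ), 0 < lam →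
      (∀ x ∈ Set.Icc a b, HasDerivAt f (f' x) x) →
      ContinuousOn f' (Set.Icc a b) →
      (MonotoneOn f' (Set.Icc a b) ∨ AntitoneOn f' (Set.Icc a b)) →
      (∀ x ∈ Set.Icc a b, lam ≤ |f' x - round (f' x)|) →
      ‖∑ n ∈ Finset.Icc ⌈a⌉ ⌊b⌋,
          Complex.exp (2 * Real.pi * Complex.I * (f n))‖ ≤ C / lam := by
  refine ⟨2, two_pos, fun a b hab f f' lam hlam hf hcont hmono hsep ↦ ?_⟩
  have hlam_le : lam ≤ 1 / 2 := (hsep a (Set.left_mem_Icc.2 hab)).trans (abs_sub_round _)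
  obtain ⟨m, hm⟩ :=
    exists_int_forall_mem_Icc_of_le_abs_sub_round isPreconnected_Icc hcont hlam hsep
  have hshift : ∀ n : ℤ, Complex.exp (2 * π * Complex.I * (f n - n * m : ℝ)) =
      Complex.exp (2 * π * Complex.I * f n) := fun n ↦ by
    exact_mod_cast exp_two_pi_mul_I_mul_sub_intCast (f n) (n * m)
  calc _ = ‖∑ n ∈ Finset.Icc ⌈a⌉ ⌊b⌋,
          Complex.exp (2 * π * Complex.I * (f n - n * m : ℝ))‖ := by simp only [hshift]
    _ ≤ 1 + 3 / (2 * lam) :=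
        norm_sum_Icc_exp_le (g := fun x ↦ f x - x * m) (g' := fun x ↦ f' x - m) hlam
          (fun x hx ↦ (hf x hx).sub (hasDerivAt_mul_const _))
          (hmono.imp (fun h x hx y hy hxy ↦ sub_le_sub_right (h hx hy hxy) _)
            fun h x hx y hy hxy ↦ sub_le_sub_right (h hx hy hxy) _)
          fun x hx ↦ ⟨by linarith [(hm x hx).1], by linarith [(hm x hx).2]⟩
    _ ≤ 2 / lam := by
        have h₁ : 1 ≤ 1 / (2 * lam) := by rw [le_div_iff₀ (by positivity)]; linarith
        have h₂ : 2 / lam = 1 / (2 * lam) + 3 / (2 * lam) := by field_simp; norm_num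
        linarith
end

section
/- Let f : [a,b] → ℝ be differentiable with f(x) ≪ P and |f′(x)| ≫ Δ and f′ of constant sign on [a,b], where b − a ≍ N. Then ∑_{N < n ≤ 2N} min{Q, 1/‖f(n)‖} ≪ (P + 1)(Q + 1/Δ) log(2 + 1/Δ), where ‖t‖ is the distance from t to the nearest integer. -/
open Finset Real

/-!
By the mean value theorem, `|f'| ≥ Δ` makes the values `f n` at distinct integers `Δ`-separated.
Label each value `x` by its nearest integer (at most `2P + 3` choices), by the side of that integer
on which `x` lies, and by `k = ⌊‖x‖ / Δ⌋`. Two values with the same label are less than `Δ` apart,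
so the labelling is injective, and the term of a value with label `k` is at most `Q` if `k = 0` and
at most `1 / (k Δ)` otherwise. Summing over all labels with `k ≤ 1 / Δ` gives a harmonic sum, whence
the bound `≪ (P + 1) (Q + log (2 + 1 / Δ) / Δ)`.
-/

lemma le_abs_sub_of_le_abs_deriv {f f' : ℝ → ℝ} {s : Set ℝ} [s.OrdConnected] {Δ : ℝ}
    (hf : ∀ x ∈ s, HasDerivAt f (f' x) x) (hf' : ∀ x ∈ s, Δ ≤ |f' x|) {x y : ℝ}
    (hx : x ∈ s) (hy : y ∈ s) : Δ * |x - y| ≤ |f x - f y| := by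
  wlog hxy : y < x generalizing x y
  · rcases (not_lt.mp hxy).eq_or_lt with rfl | hlt
    · simp
    · rw [abs_sub_comm x, abs_sub_comm (f x)]
      exact this hy hx hlt
  have hIcc : Set.Icc y x ⊆ s := Set.Icc_subset s hy hx
  obtain ⟨c, hc, hslope⟩ := exists_hasDerivAt_eq_slope f f' hxy
    (fun z hz => (hf z (hIcc hz)).continuousAt.continuousWithinAt)
    (fun z hz => hf z (hIcc (Set.Ioo_subset_Icc_self hz)))
  have hpos : 0 < x - y := sub_pos.mpr hxy
  calc Δ * |x - y| ≤ |f' c| * |x - y| :=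
        mul_le_mul_of_nonneg_right (hf' c (hIcc (Set.Ioo_subset_Icc_self hc))) (abs_nonneg _)
    _ = |f x - f y| := by
        rw [hslope, abs_div, abs_of_pos hpos, div_mul_cancel₀ _ hpos.ne']

lemma natCast_mem_Icc_of_mem_Ioc_floor {a b : ℝ} (hb : 0 ≤ b) {n : ℕ}
    (hn : n ∈ Ioc ⌊a⌋₊ ⌊b⌋₊) : (n : ℝ) ∈ Set.Icc a b := by
  rw [mem_Ioc] at hn
  exact ⟨(Nat.lt_of_floor_lt hn.1).le, (Nat.le_floor_iff hb).mp hn.2⟩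

lemma pairwise_le_abs_sub_of_le_abs_deriv {f f' : ℝ → ℝ} {a b Δ : ℝ} (hb : 0 ≤ b) (hΔ : 0 ≤ Δ)
    (hf : ∀ x ∈ Set.Icc a b, HasDerivAt f (f' x) x) (hf' : ∀ x ∈ Set.Icc a b, Δ ≤ |f' x|) :
    ((Ioc ⌊a⌋₊ ⌊b⌋₊ : Finset ℕ) : Set ℕ).Pairwise fun m n => Δ ≤ |f m - f n| := by
  intro m hm n hn hmn
  have hdist : (1 : ℝ) ≤ |(m : ℝ) - n| := by
    have : (1 : ℤ) ≤ |(m : ℤ) - n| := Int.one_le_abs (sub_ne_zero.mpr (Nat.cast_injective.ne hmn))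
    exact_mod_cast this
  calc Δ ≤ Δ * |(m : ℝ) - n| := le_mul_of_one_le_right hΔ hdist
    _ ≤ |f m - f n| := le_abs_sub_of_le_abs_deriv hf hf'
        (natCast_mem_Icc_of_mem_Ioc_floor hb hm) (natCast_mem_Icc_of_mem_Ioc_floor hb hn)

noncomputable section

def minInv (Q t : ℝ) : ℝ := if t = 0 then Q else min Q (1 / t)

def harmonicWeight (Q Δ : ℝ) (j : ℕ) : ℝ := if j = 0 then Q else 1 / (j * Δ)

def roundKey (Δ x : ℝ) : ℤ × Bool × ℕ := (round x, decide ((round x : ℝ) ≤ x), ⌊|x - round x| / Δ⌋₊)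

lemma harmonicWeight_nonneg {Q Δ : ℝ} (hQ : 0 ≤ Q) (hΔ : 0 ≤ Δ) (j : ℕ) :
    0 ≤ harmonicWeight Q Δ j := by
  unfold harmonicWeight; split_ifs <;> positivity

lemma minInv_le_harmonicWeight {Q Δ t : ℝ} (hΔ : 0 < Δ) (ht : 0 ≤ t) :
    minInv Q t ≤ harmonicWeight Q Δ ⌊t / Δ⌋₊ := by
  have hle_Q : minInv Q t ≤ Q := by unfold minInv; split_ifs <;> simp
  rcases Nat.eq_zero_or_pos ⌊t / Δ⌋₊ with hk | hk
  · simpa [harmonicWeight, hk] using hle_Q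
  have hkt : ⌊t / Δ⌋₊ * Δ ≤ t := (le_div_iff₀ hΔ).mp (Nat.floor_le (div_nonneg ht hΔ.le))
  have hkΔ : 0 < (⌊t / Δ⌋₊ : ℝ) * Δ := by positivity
  have ht0 : t ≠ 0 := (hkΔ.trans_le hkt).ne'
  simp only [minInv, harmonicWeight, ht0, hk.ne', if_false]
  exact (min_le_right _ _).trans (one_div_le_one_div_of_le hkΔ hkt)

lemma abs_sub_lt_of_roundKey_eq {Δ x y : ℝ} (hΔ : 0 < Δ) (h : roundKey Δ x = roundKey Δ y) :
    |x - y| < Δ := by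
  simp only [roundKey, Prod.mk.injEq, decide_eq_decide] at h
  obtain ⟨hr, hside, hk⟩ := h
  have hxy : |x - y| = |(|x - round x| - |y - round y|)| := by
    rw [hr] at hside ⊢
    by_cases hx : (round y : ℝ) ≤ x
    · rw [abs_of_nonneg (sub_nonneg.mpr hx), abs_of_nonneg (sub_nonneg.mpr (hside.mp hx))]
      ring_nf
    · have hy : ¬ (round y : ℝ) ≤ y := fun hy => hx (hside.mpr hy)
      rw [not_le] at hx hy
      rw [abs_of_neg (sub_neg.mpr hx), abs_of_neg (sub_neg.mpr hy), ← abs_neg]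
      ring_nf
  have hfloor : ⌊|x - round x| / Δ⌋ = ⌊|y - round y| / Δ⌋ := by
    rw [← Int.natCast_floor_eq_floor (by positivity), ← Int.natCast_floor_eq_floor (by positivity), hk]
  have := Int.abs_sub_lt_one_of_floor_eq_floor hfloor
  rwa [← sub_div, abs_div, abs_of_pos hΔ, div_lt_one hΔ, ← hxy] at this

lemma roundKey_mem {P Δ x : ℝ} (hΔ : 0 < Δ) (hx : |x| ≤ P) :
    roundKey Δ x ∈ Icc (-⌈P⌉) ⌈P⌉ ×ˢ ((univ : Finset Bool) ×ˢ range (⌊1 / Δ⌋₊ + 1)) := by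
  have hround : |(round x : ℝ)| < ⌈P⌉ + 1 := by
    have := abs_sub_round x
    have := abs_sub_abs_le_abs_sub (round x : ℝ) x
    rw [abs_sub_comm] at this
    linarith [Int.le_ceil P]
  have hnorm : |x - round x| / Δ ≤ 1 / Δ := by
    gcongr
    linarith [abs_sub_round x]
  simp only [roundKey, mem_product, mem_Icc, mem_univ, mem_range, true_and, Nat.lt_succ_iff]
  refine ⟨abs_le.mp (Int.lt_add_one_iff.mp ?_), Nat.floor_le_floor hnorm⟩
  exact_mod_cast hround

lemma sum_harmonicWeight_product (Q Δ : ℝ) (M : Finset ℤ) (K : ℕ) :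
    ∑ p ∈ M ×ˢ ((univ : Finset Bool) ×ˢ range (K + 1)), harmonicWeight Q Δ p.2.2
      = #M * (2 * ∑ j ∈ range (K + 1), harmonicWeight Q Δ j) := by
  simp [sum_product, two_mul, mul_add]

theorem sum_minInv_le_of_pairwise_le_abs_sub {ι : Type*} (s : Finset ι) (g : ι → ℝ)
    {Q Δ P : ℝ} (hQ : 0 ≤ Q) (hΔ : 0 < Δ)
    (hsep : (s : Set ι).Pairwise fun m n => Δ ≤ |g m - g n|) (hbound : ∀ n ∈ s, |g n| ≤ P) :
    ∑ n ∈ s, minInv Q |g n - round (g n)|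
      ≤ #(Icc (-⌈P⌉) ⌈P⌉) * (2 * ∑ j ∈ range (⌊1 / Δ⌋₊ + 1), harmonicWeight Q Δ j) := by
  have hinj : Set.InjOn (fun n => roundKey Δ (g n)) s := by
    intro m hm n hn hmn
    by_contra hne
    exact (hsep hm hn hne).not_gt (abs_sub_lt_of_roundKey_eq hΔ hmn)
  calc ∑ n ∈ s, minInv Q |g n - round (g n)|
      ≤ ∑ n ∈ s, harmonicWeight Q Δ (roundKey Δ (g n)).2.2 :=
        sum_le_sum fun n _ => minInv_le_harmonicWeight hΔ (abs_nonneg _)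
    _ = ∑ p ∈ s.image fun n => roundKey Δ (g n), harmonicWeight Q Δ p.2.2 :=
        (sum_image (f := fun p : ℤ × Bool × ℕ => harmonicWeight Q Δ p.2.2) hinj).symm
    _ ≤ ∑ p ∈ Icc (-⌈P⌉) ⌈P⌉ ×ˢ ((univ : Finset Bool) ×ˢ range (⌊1 / Δ⌋₊ + 1)),
          harmonicWeight Q Δ p.2.2 := by
        refine sum_le_sum_of_subset_of_nonneg ?_ fun p _ _ => harmonicWeight_nonneg hQ hΔ.le _
        simpa only [image_subset_iff] using fun n hn => roundKey_mem hΔ (hbound n hn)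
    _ = _ := sum_harmonicWeight_product Q Δ _ _

lemma card_Icc_neg_ceil_le {P : ℝ} (hP : 0 ≤ P) : (#(Icc (-⌈P⌉) ⌈P⌉) : ℝ) ≤ 2 * P + 3 := by
  have hcard : (#(Icc (-⌈P⌉) ⌈P⌉) : ℤ) = 2 * ⌈P⌉ + 1 := by
    rw [Int.card_Icc, Int.toNat_of_nonneg (by linarith [Int.ceil_nonneg hP])]; ring
  have : ((#(Icc (-⌈P⌉) ⌈P⌉) : ℤ) : ℝ) = 2 * ⌈P⌉ + 1 := by rw [hcard]; push_cast; ring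
  rw [Int.cast_natCast] at this
  linarith [Int.ceil_lt_add_one P]

lemma sum_range_harmonicWeight (Q Δ : ℝ) (K : ℕ) :
    ∑ j ∈ range (K + 1), harmonicWeight Q Δ j = Q + harmonic K / Δ := by
  rw [sum_range_succ', harmonic, Rat.cast_sum, sum_div, add_comm]
  simp [harmonicWeight, div_eq_inv_mul, mul_comm]

lemma sum_range_harmonicWeight_floor_le {Q Δ : ℝ} (hQ : 0 ≤ Q) (hΔ : 0 < Δ) :
    ∑ j ∈ range (⌊1 / Δ⌋₊ + 1), harmonicWeight Q Δ j ≤ 3 * (Q + 1 / Δ) * log (2 + 1 / Δ) := by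
  set L := log (2 + 1 / Δ)
  have hinv : 0 < 1 / Δ := by positivity
  have hL : 1 ≤ 2 * L := by
    have : log 2 ≤ L := log_le_log two_pos (by linarith)
    linarith [log_two_gt_d9]
  have hlogK : log ⌊1 / Δ⌋₊ ≤ L := by
    rcases Nat.eq_zero_or_pos ⌊1 / Δ⌋₊ with h | h
    · rw [h, Nat.cast_zero, log_zero]; linarith
    · exact log_le_log (by exact_mod_cast h) (by linarith [Nat.floor_le hinv.le])
  have hharm : (harmonic ⌊1 / Δ⌋₊ : ℝ) ≤ 1 + L := (harmonic_le_one_add_log _).trans (by linarith)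
  rw [sum_range_harmonicWeight, div_eq_mul_one_div _ Δ]
  nlinarith [mul_le_mul_of_nonneg_right hharm hinv.le]

end

theorem sum_min_inv_norm :
    ∃ C > 0, ∀ (N Q P Δ : ℝ), 1 ≤ N → 1 ≤ Q → 0 < P → 0 < Δ →
      ∀ f f' : ℝ → ℝ,
      (∀ x ∈ Set.Icc N (2 * N), HasDerivAt f (f' x) x) →
      (∀ x ∈ Set.Icc N (2 * N), |f x| ≤ P) →
      (∀ x ∈ Set.Icc N (2 * N), Δ ≤ |f' x|) →
      ((∀ x ∈ Set.Icc N (2 * N), 0 < f' x) ∨ (∀ x ∈ Set.Icc N (2 * N), f' x < 0)) →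
      (∑ n ∈ Finset.Ioc ⌊N⌋₊ ⌊2 * N⌋₊,
          (if |f n - round (f n)| = 0 then Q else min Q (1 / |f n - round (f n)|)))
        ≤ C * (P + 1) * (Q + 1 / Δ) * Real.log (2 + 1 / Δ) := by
  refine ⟨18, by norm_num, fun N Q P Δ hN hQ hP hΔ f f' hf hfP hf' _ => ?_⟩
  have h2N : (0 : ℝ) ≤ 2 * N := by linarith
  have hbound : ∀ n ∈ Ioc ⌊N⌋₊ ⌊2 * N⌋₊, |f n| ≤ P := fun n hn =>
    hfP n (natCast_mem_Icc_of_mem_Ioc_floor h2N hn)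
  calc _ ≤ #(Icc (-⌈P⌉) ⌈P⌉) * (2 * ∑ j ∈ range (⌊1 / Δ⌋₊ + 1), harmonicWeight Q Δ j) :=
        sum_minInv_le_of_pairwise_le_abs_sub _ (fun n : ℕ => f n) (by linarith) hΔ
          (pairwise_le_abs_sub_of_le_abs_deriv h2N hΔ.le hf hf') hbound
    _ ≤ (3 * (P + 1)) * (2 * (3 * (Q + 1 / Δ) * log (2 + 1 / Δ))) := by
        gcongr ?_ * (2 * ?_)
        · exact mul_nonneg zero_le_two
            (sum_nonneg fun j _ => harmonicWeight_nonneg (by linarith) hΔ.le j)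
        · linarith [card_Icc_neg_ceil_le hP.le]
        · exact sum_range_harmonicWeight_floor_le (by linarith) hΔ
    _ = 18 * (P + 1) * (Q + 1 / Δ) * Real.log (2 + 1 / Δ) := by ring
end
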